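/- For every r ∈ ℝ^d, r ∈ D_d^{(0)} if and only if for all a in the set of witnesses V_r there exists n ∈ ℕ with τ_r^n(a) = 0, where V_r is any set V ⊆ ℤ^d stable under τ_r and τ_r^*, containing the standard basis vectors and their negatives. -/
import Mathlib


open scoped BigOperators

/-- Inner product of a real parameter vector with an integer vector. -/
noncomputable def dotp {d : ℕ} (r : Fin d → ℝ) (a : Fin d → ℤ) : ℝ := ∑ j, r j * (a j : ℝ)

/-- The shift radix system map τ_r. -/
noncomputable def tau {d : ℕ} (r : Fin d → ℝ) (a : Fin d → ℤ) : Fin d → ℤ :=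
  fun i => if h : (i : ℕ) + 1 < d then a ⟨(i : ℕ) + 1, h⟩ else -⌊dotp r a⌋

/-- τ_r^* := -τ_r ∘ (-id). -/
noncomputable def tauStar {d : ℕ} (r : Fin d → ℝ) (a : Fin d → ℤ) : Fin d → ℤ :=
  -(tau r (-a))

lemma floor_add_cases (x y : ℝ) : ⌊x+y⌋ = ⌊x⌋ + ⌊y⌋ ∨ ⌊x+y⌋ = ⌊x⌋ - ⌊-y⌋ := by
  have h1 : ⌊x⌋ + ⌊y⌋ ≤ ⌊x+y⌋ :=
    Int.le_floor.2 (by push_cast; exact add_le_add (Int.floor_le x) (Int.floor_le y))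
  have h2 : ⌊x+y⌋ < ⌊x⌋ + ⌈y⌉ + 1 :=
    Int.floor_lt.2 (by push_cast; linarith [Int.lt_floor_add_one x, Int.le_ceil y])
  have h3 : ⌈y⌉ ≤ ⌊y⌋ + 1 := Int.ceil_le_floor_add_one y
  have h4 : ⌊y⌋ ≤ ⌈y⌉ := Int.floor_le_ceil y
  have h5 : ⌊-y⌋ = -⌈y⌉ := Int.floor_neg
  omega

lemma dotp_add {d : ℕ} (r : Fin d → ℝ) (a b : Fin d → ℤ) :
    dotp r (a + b) = dotp r a + dotp r b := by
  simp only [dotp, Pi.add_apply, Int.cast_add, mul_add, Finset.sum_add_distrib]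

lemma dotp_neg {d : ℕ} (r : Fin d → ℝ) (a : Fin d → ℤ) :
    dotp r (-a) = -dotp r a := by
  simp only [dotp, Pi.neg_apply, Int.cast_neg, mul_neg, ← Finset.sum_neg_distrib]

lemma tau_add_cases {d : ℕ} (r : Fin d → ℝ) (a b : Fin d → ℤ) :
    tau r (a + b) = tau r a + tau r b ∨ tau r (a + b) = tau r a + tauStar r b := by
  rcases floor_add_cases (dotp r a) (dotp r b) with h | h
  · left
    funext i
    simp only [tau, Pi.add_apply]
    split
    · rfl
    · rw [dotp_add, h]; ring
  · right
    funext i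
    simp only [tau, tauStar, Pi.add_apply, Pi.neg_apply]
    split
    · ring
    · rw [dotp_add, dotp_neg, h]; ring

lemma key_iter {d : ℕ} (r : Fin d → ℝ) (V : Set (Fin d → ℤ))
    (hV : ∀ a ∈ V, tau r a ∈ V) (hV' : ∀ a ∈ V, tauStar r a ∈ V) :
    ∀ n : ℕ, ∀ a b : Fin d → ℤ, b ∈ V →
      ∃ v ∈ V, (tau r)^[n] (a + b) = (tau r)^[n] a + v := by
  intro n
  induction n with
  | zero => intro a b hb; exact ⟨b, hb, rfl⟩
  | succ n ih =>
    intro a b hb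
    rcases tau_add_cases r a b with h | h
    · obtain ⟨v, hv, hv2⟩ := ih (tau r a) (tau r b) (hV b hb)
      refine ⟨v, hv, ?_⟩
      rw [Function.iterate_succ_apply, Function.iterate_succ_apply, h, hv2]
    · obtain ⟨v, hv, hv2⟩ := ih (tau r a) (tauStar r b) (hV' b hb)
      refine ⟨v, hv, ?_⟩
      rw [Function.iterate_succ_apply, Function.iterate_succ_apply, h, hv2]

lemma main_ind {d : ℕ} (r : Fin d → ℝ) (V : Set (Fin d → ℤ))
    (hV : ∀ a ∈ V, tau r a ∈ V) (hV' : ∀ a ∈ V, tauStar r a ∈ V)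
    (hbasis : ∀ j : Fin d, (Pi.single j 1 : Fin d → ℤ) ∈ V ∧
      (-Pi.single j 1 : Fin d → ℤ) ∈ V)
    (h : ∀ a ∈ V, ∃ n : ℕ, (tau r)^[n] a = 0) :
    ∀ N : ℕ, ∀ a : Fin d → ℤ, (∑ i, (a i).natAbs) ≤ N → ∃ n : ℕ, (tau r)^[n] a = 0 := by
  intro N
  induction N with
  | zero =>
    intro a ha
    refine ⟨0, ?_⟩
    funext i
    have := Finset.sum_eq_zero_iff.1 (Nat.le_zero.1 ha) i (Finset.mem_univ i)
    simpa [Int.natAbs_eq_zero] using this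
  | succ N ih =>
    intro a ha
    by_cases h0 : a = 0
    · exact ⟨0, by simp [h0]⟩
    · obtain ⟨j, hj⟩ := Function.ne_iff.1 h0
      simp only [Pi.zero_apply] at hj
      set s : ℤ := if 0 < a j then 1 else -1 with hs_def
      have hw : (Pi.single j s : Fin d → ℤ) ∈ V := by
        by_cases hpos : 0 < a j
        · simpa [hs_def, hpos] using (hbasis j).1
        · have : (Pi.single j s : Fin d → ℤ) = -Pi.single j 1 := by
            simp [hs_def, hpos, ← Pi.single_neg]
          rw [this]; exact (hbasis j).2
      set b : Fin d → ℤ := Function.update a j (a j - s) with hb_def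
      have hab : a = b + Pi.single j s := by
        funext i
        by_cases hi : i = j
        · subst hi; simp [hb_def]
        · simp [hb_def, Function.update_of_ne hi, Pi.single_eq_of_ne hi]
      have hnorm : (∑ i, (b i).natAbs) ≤ N := by
        have hkey : (b j).natAbs + 1 = (a j).natAbs := by
          have : b j = a j - s := by simp [hb_def]
          rw [this]
          by_cases hpos : 0 < a j <;> simp [hs_def, hpos] <;> omega
        have hsum : (∑ i, (b i).natAbs) + 1 = ∑ i, (a i).natAbs := by
          rw [← Finset.sum_erase_add Finset.univ (fun i => (b i).natAbs) (Finset.mem_univ j),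
            ← Finset.sum_erase_add Finset.univ (fun i => (a i).natAbs) (Finset.mem_univ j)]
          have h1 : ∀ i ∈ Finset.univ.erase j, (b i).natAbs = (a i).natAbs := by
            intro i hi
            simp [hb_def, Function.update_of_ne (Finset.ne_of_mem_erase hi)]
          rw [Finset.sum_congr rfl h1]
          omega
        omega
      obtain ⟨m, hm⟩ := ih b hnorm
      obtain ⟨v, hvV, hv⟩ := key_iter r V hV hV' m b (Pi.single j s) hw
      obtain ⟨k, hk⟩ := h v hvV
      refine ⟨k + m, ?_⟩
      rw [hab, Function.iterate_add_apply, hv, hm, zero_add, hk]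

/-- D_d^{(0)}: parameters with the finiteness property. -/
def D0 (d : ℕ) : Set (Fin d → ℝ) :=
  {r | ∀ a : Fin d → ℤ, ∃ n : ℕ, (tau r)^[n] a = 0}

/-- D_d: parameters with all orbits eventually periodic. -/
def Dset (d : ℕ) : Set (Fin d → ℝ) :=
  {r | ∀ a : Fin d → ℤ, ∃ m n : ℕ, m ≠ n ∧ (tau r)^[m] a = (tau r)^[n] a}

/-- The iteration producing the set of witnesses. -/
def Vseq {d : ℕ} (r : Fin d → ℝ) : ℕ → Set (Fin d → ℤ)
  | 0 => {v | ∃ j : Fin d, v = Pi.single j 1 ∨ v = -Pi.single j 1}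
  | n + 1 => Vseq r n ∪ (tau r '' Vseq r n) ∪ (tauStar r '' Vseq r n)

/-- The set of witnesses associated with r. -/
def Vr {d : ℕ} (r : Fin d → ℝ) : Set (Fin d → ℤ) := ⋃ n, Vseq r n

/-- The polyhedron P_r of parameters acting like r on the witnesses of r. -/
def Pr {d : ℕ} (r : Fin d → ℝ) : Set (Fin d → ℝ) :=
  {s | ∀ a ∈ Vr r, tau s a = tau r a ∧ tauStar s a = tauStar r a}

theorem stmt4 {d : ℕ} (r : Fin d → ℝ) (V : Set (Fin d → ℤ))
    (hV : ∀ a ∈ V, tau r a ∈ V) (hV' : ∀ a ∈ V, tauStar r a ∈ V)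
    (hbasis : ∀ j : Fin d, (Pi.single j 1 : Fin d → ℤ) ∈ V ∧
      (-Pi.single j 1 : Fin d → ℤ) ∈ V) :
    r ∈ D0 d ↔ ∀ a ∈ V, ∃ n : ℕ, (tau r)^[n] a = 0 := by
  constructor
  · intro hr a _
    exact hr a
  · intro h a
    exact main_ind r V hV hV' hbasis h (∑ i, (a i).natAbs) a le_rfl
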